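/- arXiv:1412.4386 — 2 statements merged into one kernel-verified Lean document; each statement's English description precedes it below -/
import Mathlib

section
/- Let E be a finite-dimensional real Banach space, ∂_w a weak subdifferential, and f : E → ]−∞,+∞] proper, lower semicontinuous, and with insignificant downside, and suppose gra ∂_w f is closed in E × E*. Then gra ∂_w f − gra(−J) = E × E* (Minkowski difference) and ran(∂_w f + J) = E*, where (∂_w f + J)(x) = ∂_w f(x) + J(x). -/
open Pointwise

/-- The convex subdifferential of a continuous convex real function `h` at `x`. -/
def convSubdiff {E : Type*} [NormedAddCommGroup E] [NormedSpace ℝ E]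
    (h : E → ℝ) (x : E) : Set (StrongDual ℝ E) :=
  {z | ∀ y : E, h x + z (y - x) ≤ h y}

/-- A weak subdifferential: a rule associating with each proper lower semicontinuous
`f : E → ]-∞,+∞]` a multifunction `E ⇉ E*` such that (i) `0 ∈ ∂_w f(x)` whenever `f`
attains a strict global minimum at `x`, and (ii) `∂_w(f + h)(x) ⊆ ∂_w f(x) + ∂h(x)`
for every continuous convex real function `h` on `E`. -/
structure WeakSubdiff (E : Type*) [NormedAddCommGroup E] [NormedSpace ℝ E] where
  sd : (E → EReal) → E → Set (StrongDual ℝ E)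
  zero_mem : ∀ f : E → EReal, (∃ x, f x ≠ ⊤) → (∀ x, f x ≠ ⊥) →
    LowerSemicontinuous f →
    ∀ x : E, (∀ y : E, y ≠ x → f x < f y) → 0 ∈ sd f x
  sum_rule : ∀ f : E → EReal, (∃ x, f x ≠ ⊤) → (∀ x, f x ≠ ⊥) →
    LowerSemicontinuous f →
    ∀ h : E → ℝ, Continuous h → ConvexOn ℝ Set.univ h →
    ∀ x : E, sd (fun z => f z + (h z : EReal)) x ⊆ sd f x + convSubdiff h x

/-- The duality mapping `J(x) = {x* : ⟨x, x*⟩ = ‖x‖², ‖x*‖ = ‖x‖}`. -/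
def dualityJ {E : Type*} [NormedAddCommGroup E] [NormedSpace ℝ E] (x : E) :
    Set (StrongDual ℝ E) :=
  {x' | x' x = ‖x‖ ^ 2 ∧ ‖x'‖ = ‖x‖}

/-- The graph of `-J`. -/
def graNegJ (E : Type*) [NormedAddCommGroup E] [NormedSpace ℝ E] :
    Set (E × StrongDual ℝ E) :=
  {p | -p.2 ∈ dualityJ p.1}

/-- `f` has insignificant downside: `f(x) ≥ -a₀‖x‖² - b₀‖x‖ - c₀` with `a₀ < ½`. -/
def InsigDownside {E : Type*} [NormedAddCommGroup E] [NormedSpace ℝ E]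
    (f : E → EReal) : Prop :=
  ∃ a₀ b₀ c₀ : ℝ, a₀ < 1 / 2 ∧
    ∀ x : E, ((-a₀ * ‖x‖ ^ 2 - b₀ * ‖x‖ - c₀ : ℝ) : EReal) ≤ f x


/-! Given `(z, z')`, the function `F x = f x + ‖x - z‖² / 2 - z' x` is lower semicontinuous and,
because `f` has insignificant downside, coercive; in finite dimension it therefore attains its
minimum at some `x₀`. Adding `‖x - x₀‖²` makes this minimum strict, so the two axioms of a weak
subdifferential give `x' ∈ ∂_w f x₀` with `-x'` a convex subgradient of
`‖x - z‖² / 2 - z' x + ‖x - x₀‖²` at `x₀`. The perturbation is of second order at `x₀`, so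
`z' - x'` is a subgradient of `‖·‖² / 2` at `x₀ - z`, i.e. `z' - x' ∈ J (x₀ - z)`. -/

open Filter Topology

theorem le_of_forall_pos_le_add_mul {a b c : ℝ} (h : ∀ t > 0, a ≤ b + t * c) : a ≤ b := by
  have hlim : Tendsto (fun t : ℝ => b + t * c) (𝓝[>] 0) (𝓝 b) := by
    have : Continuous fun t : ℝ => b + t * c := by fun_prop
    simpa using (this.tendsto 0).mono_left nhdsWithin_le_nhds
  exact ge_of_tendsto hlim (eventually_nhdsWithin_of_forall h)

theorem LowerSemicontinuous.exists_forall_le' {α β : Type*} [TopologicalSpace α] [LinearOrder β]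
    {f : α → β} (hf : LowerSemicontinuous f) (x₀ : α)
    (h : ∀ᶠ x in cocompact α, f x₀ ≤ f x) : ∃ x, ∀ y, f x ≤ f y := by
  obtain ⟨K, hK, hKf⟩ := mem_cocompact.1 h
  obtain ⟨x, -, hx⟩ := (hf.lowerSemicontinuousOn _).exists_isMinOn (Set.insert_nonempty x₀ K)
    (hK.insert x₀)
  refine ⟨x, fun y => ?_⟩
  by_cases hyK : y ∈ K
  exacts [hx (Or.inr hyK), (hx (Or.inl rfl)).trans (hKf hyK)]

theorem LowerSemicontinuous.add_coe_of_continuous {α : Type*} [TopologicalSpace α] {f : α → EReal}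
    (hf : LowerSemicontinuous f) {h : α → ℝ} (hh : Continuous h) :
    LowerSemicontinuous fun x => f x + (h x : EReal) :=
  hf.add' (continuous_coe_real_ereal.comp hh).lowerSemicontinuous fun _ =>
    EReal.continuousAt_add (Or.inr (EReal.coe_ne_bot _)) (Or.inr (EReal.coe_ne_top _))

section

variable {E : Type*} [NormedAddCommGroup E] [NormedSpace ℝ E]

theorem InsigDownside.eventually_le_add [ProperSpace E] {f : E → EReal} (hf : InsigDownside f)
    {h : E → ℝ} {b : ℝ} (hh : ∀ x, ‖x‖ ^ 2 / 2 - b * ‖x‖ ≤ h x) (M : ℝ) :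
    ∀ᶠ x in cocompact E, (M : EReal) ≤ f x + h x := by
  obtain ⟨a₀, b₀, c₀, ha₀, hf⟩ := hf
  have hq : Tendsto (fun r : ℝ => r * ((1 / 2 - a₀) * r - (b₀ + b)) - c₀) atTop atTop :=
    tendsto_atTop_add_const_right _ _ <| tendsto_id.atTop_mul_atTop₀ <|
      tendsto_atTop_add_const_right _ _ <| tendsto_id.const_mul_atTop (by linarith)
  filter_upwards [(hq.comp tendsto_norm_cocompact_atTop).eventually_ge_atTop M] with x hx
  calc (M : EReal) ≤ ((-a₀ * ‖x‖ ^ 2 - b₀ * ‖x‖ - c₀ : ℝ) : EReal) + (h x : EReal) := by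
        rw [← EReal.coe_add, EReal.coe_le_coe_iff]
        have := hh x
        simp only [Function.comp_apply] at hx
        nlinarith
    _ ≤ f x + h x := by gcongr; exact hf x

theorem mem_dualityJ_of_forall_le {u : E} {w : StrongDual ℝ E} {C : ℝ}
    (hw : ∀ v, ‖u‖ ^ 2 / 2 + w (v - u) ≤ ‖v‖ ^ 2 / 2 + C * ‖v - u‖ ^ 2) : w ∈ dualityJ u := by
  have hstep : ∀ d : E, ∀ t > 0,
      t * w d ≤ (‖u + t • d‖ ^ 2 - ‖u‖ ^ 2) / 2 + C * t ^ 2 * ‖d‖ ^ 2 := by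
    intro d t ht
    have := hw (u + t • d)
    simp only [add_sub_cancel_left, map_smul, smul_eq_mul, norm_smul, Real.norm_of_nonneg ht.le,
      mul_pow] at this
    linarith
  have hle : ∀ d : E, w d ≤ ‖u‖ * ‖d‖ := by
    intro d
    refine le_of_forall_pos_le_add_mul (c := (1 / 2 + C) * ‖d‖ ^ 2) fun t ht => ?_
    have h1 := hstep d t ht
    have h2 : ‖u + t • d‖ ≤ ‖u‖ + t * ‖d‖ := by
      simpa [norm_smul, Real.norm_of_nonneg ht.le] using norm_add_le u (t • d)
    have h3 : ‖u + t • d‖ ^ 2 ≤ (‖u‖ + t * ‖d‖) ^ 2 := by gcongr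
    refine le_of_mul_le_mul_left ?_ ht
    nlinarith
  have hge : ‖u‖ ^ 2 ≤ w u := by
    refine le_of_forall_pos_le_add_mul (c := (1 / 2 + C) * ‖u‖ ^ 2) fun t ht => ?_
    have h1 := hstep (-u) t ht
    have h2 : u + t • -u = (1 - t) • u := by module
    rw [h2, norm_smul, mul_pow, Real.norm_eq_abs, sq_abs, map_neg, norm_neg] at h1
    refine le_of_mul_le_mul_left ?_ ht
    nlinarith
  have hwu : w u = ‖u‖ ^ 2 := le_antisymm ((hle u).trans_eq (sq _).symm) hge
  have hnorm_le : ‖w‖ ≤ ‖u‖ := by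
    refine w.opNorm_le_bound (norm_nonneg u) fun d => abs_le.2 ⟨?_, hle d⟩
    linarith [show -w d ≤ ‖u‖ * ‖d‖ by simpa using hle (-d)]
  refine ⟨hwu, le_antisymm hnorm_le ?_⟩
  rcases (norm_nonneg u).eq_or_lt with hu | hu
  · rw [← hu]; exact norm_nonneg w
  · have := w.le_opNorm u
    rw [Real.norm_eq_abs, hwu, abs_of_nonneg (by positivity)] at this
    nlinarith

theorem le_sq_norm_sub_div_two_sub_apply (z : E) (z' : StrongDual ℝ E) (x : E) :
    ‖x‖ ^ 2 / 2 - (‖z‖ + ‖z'‖) * ‖x‖ ≤ ‖x - z‖ ^ 2 / 2 - z' x := by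
  have h1 : |‖x‖ - ‖z‖| ≤ ‖x - z‖ := abs_norm_sub_norm_le x z
  have h2 : (‖x‖ - ‖z‖) ^ 2 ≤ ‖x - z‖ ^ 2 := by
    rw [← sq_abs]; gcongr
  have h3 : z' x ≤ ‖z'‖ * ‖x‖ := (le_abs_self _).trans (z'.le_opNorm x)
  nlinarith [sq_nonneg ‖z‖]

theorem convexOn_univ_sq_norm_sub (c : E) : ConvexOn ℝ Set.univ fun x => ‖x - c‖ ^ 2 :=
  ((convexOn_dist c convex_univ).pow (fun _ _ => dist_nonneg) 2).congr fun x _ => by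
    simp [dist_eq_norm]

theorem exists_mem_sd_sub_mem_dualityJ [FiniteDimensional ℝ E] (W : WeakSubdiff E)
    {f : E → EReal} (hproper : ∃ x, f x ≠ ⊤) (hnotbot : ∀ x, f x ≠ ⊥)
    (hlsc : LowerSemicontinuous f) (hdown : InsigDownside f) (z : E) (z' : StrongDual ℝ E) :
    ∃ x, ∃ x' ∈ W.sd f x, z' - x' ∈ dualityJ (x - z) := by
  set h : E → ℝ := fun x => ‖x - z‖ ^ 2 / 2 - z' x with hh
  have hh_cont : Continuous h := by fun_prop
  obtain ⟨x₁, hx₁⟩ := hproper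
  have hFx₁ : f x₁ + (h x₁ : EReal) = ((f x₁).toReal + h x₁ : ℝ) := by
    rw [EReal.coe_add, EReal.coe_toReal hx₁ (hnotbot x₁)]
  obtain ⟨x₀, hx₀⟩ := (hlsc.add_coe_of_continuous hh_cont).exists_forall_le' x₁ <| hFx₁ ▸
    hdown.eventually_le_add (le_sq_norm_sub_div_two_sub_apply z z') _
  have hx₀_top : f x₀ + (h x₀ : EReal) ≠ ⊤ :=
    ((hx₀ x₁).trans_lt (hFx₁ ▸ EReal.coe_lt_top _)).ne
  have hne_bot : ∀ x, ∀ r : ℝ, f x + (r : EReal) ≠ ⊥ := fun x r => by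
    simp [EReal.add_eq_bot_iff, hnotbot x]
  set H : E → ℝ := fun x => h x + ‖x - x₀‖ ^ 2 with hH
  have hH_cont : Continuous H := by fun_prop
  have hH_conv : ConvexOn ℝ Set.univ H :=
    (((convexOn_univ_sq_norm_sub z).smul (by norm_num : (0 : ℝ) ≤ 1 / 2)).sub
      ((z' : E →ₗ[ℝ] ℝ).concaveOn convex_univ)).add (convexOn_univ_sq_norm_sub x₀) |>.congr
      fun x _ => by simp [hH, hh]; ring
  have hsplit : ∀ x, f x + (H x : EReal) = f x + (h x : EReal) + ((‖x - x₀‖ ^ 2 : ℝ) : EReal) :=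
    fun x => by rw [hH, EReal.coe_add, add_assoc]
  have hstrict : ∀ y, y ≠ x₀ → f x₀ + (H x₀ : EReal) < f y + (H y : EReal) := by
    intro y hy
    rw [hsplit, hsplit, add_comm, add_comm (f y + _)]
    refine EReal.add_lt_add_of_lt_of_le' ?_ (hx₀ y) (hne_bot y _) fun _ h => absurd h hx₀_top
    rw [EReal.coe_lt_coe_iff, sub_self, norm_zero, zero_pow two_ne_zero]
    exact pow_pos (norm_pos_iff.2 (sub_ne_zero.2 hy)) 2
  have h0 := W.zero_mem _ ⟨x₁, EReal.add_ne_top hx₁ (EReal.coe_ne_top _)⟩ (fun x => hne_bot x _)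
    (hlsc.add_coe_of_continuous hH_cont) x₀ hstrict
  obtain ⟨x', hx', w, hw, hsum⟩ := W.sum_rule f ⟨x₁, hx₁⟩ hnotbot hlsc H hH_cont hH_conv x₀ h0
  obtain rfl : w = -x' := eq_neg_of_add_eq_zero_right hsum
  refine ⟨x₀, x', hx', mem_dualityJ_of_forall_le (C := 1) fun v => ?_⟩
  have := hw (v + z)
  simp only [hH, hh, add_sub_cancel_right, sub_self, norm_zero, neg_apply, sub_apply, map_sub,
    map_add, ne_eq, OfNat.ofNat_ne_zero, not_false_eq_true, zero_pow] at this ⊢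
  rw [show v + z - x₀ = v - (x₀ - z) by abel] at this
  linarith

end

theorem stmt6_general {E : Type*} [NormedAddCommGroup E] [NormedSpace ℝ E]
    [FiniteDimensional ℝ E]
    (W : WeakSubdiff E) (f : E → EReal)
    (hproper : ∃ x, f x ≠ ⊤) (hnotbot : ∀ x, f x ≠ ⊥)
    (hlsc : LowerSemicontinuous f) (hdown : InsigDownside f) :
    {p : E × StrongDual ℝ E | p.2 ∈ W.sd f p.1} - graNegJ E = Set.univ ∧
      ∀ z' : StrongDual ℝ E, ∃ x : E, z' ∈ W.sd f x + dualityJ x := by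
  refine ⟨Set.eq_univ_of_forall fun p => ?_, fun z' => ?_⟩
  · obtain ⟨x, x', hx', hJ⟩ :=
      exists_mem_sd_sub_mem_dualityJ W hproper hnotbot hlsc hdown p.1 p.2
    exact Set.mem_sub.2 ⟨(x, x'), hx', (x - p.1, x' - p.2), by simpa [graNegJ] using hJ, by simp⟩
  · obtain ⟨x, x', hx', hJ⟩ := exists_mem_sd_sub_mem_dualityJ W hproper hnotbot hlsc hdown 0 z'
    exact ⟨x, Set.mem_add.2 ⟨x', hx', z' - x', by simpa using hJ, by abel⟩⟩

theorem stmt6 {E : Type*} [NormedAddCommGroup E] [NormedSpace ℝ E] [CompleteSpace E]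
    [FiniteDimensional ℝ E]
    (W : WeakSubdiff E) (f : E → EReal)
    (hproper : ∃ x, f x ≠ ⊤) (hnotbot : ∀ x, f x ≠ ⊥)
    (hlsc : LowerSemicontinuous f) (hdown : InsigDownside f)
    (hclosed : IsClosed {p : E × StrongDual ℝ E | p.2 ∈ W.sd f p.1}) :
    {p : E × StrongDual ℝ E | p.2 ∈ W.sd f p.1} - graNegJ E = Set.univ ∧
      ∀ z' : StrongDual ℝ E, ∃ x : E, z' ∈ W.sd f x + dualityJ x :=
  stmt6_general W f hproper hnotbot hlsc hdown
end

section
/- Let E be a real Banach space, ∂_w a weak subdifferential, and f : E → ]−∞,+∞] proper, lower semicontinuous, and with insignificant downside. Then (gra ∂_w f)^μ ⊆ closure(gra ∂_w f), where the closure is the norm-closure in E × E*. -/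
open Pointwise

/-- The monotone polar `A^μ` of `A ⊆ E × E*`. -/
def monoPolar {E : Type*} [NormedAddCommGroup E] [NormedSpace ℝ E]
    (A : Set (E × StrongDual ℝ E)) : Set (E × StrongDual ℝ E) :=
  {p | ∀ q ∈ A, 0 ≤ (q.2 - p.2) (q.1 - p.1)}

/-! Let `(x₀, x₀*)` lie in the monotone polar and `ε > 0`. Insignificant downside makes
`f + ‖· - x₀‖² - x₀*` bounded below, so Ekeland's variational principle gives a point `v` at which
`f + ‖· - x₀‖² - x₀* + ε‖· - v‖` has a strict global minimum. By the two axioms of `∂_w` there is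
`a ∈ ∂_w f(v)` such that `-a` is a subgradient at `v` of the convex perturbation. Testing this
subgradient inequality at `x₀` and using `⟨v - x₀, a - x₀*⟩ ≥ 0` gives `‖v - x₀‖ ≤ ε`; testing it at
`v + εu` with `‖u‖ = 1` then gives `‖a - x₀*‖ ≤ 4ε`. -/

open Filter Topology Metric Set

lemma LowerSemicontinuous.add_coe {X : Type*} [TopologicalSpace X] {f : X → EReal}
    (hf : LowerSemicontinuous f) {h : X → ℝ} (hh : Continuous h) :
    LowerSemicontinuous fun z => f z + (h z : EReal) :=
  hf.add' (continuous_coe_real_ereal.comp hh).lowerSemicontinuous fun _ =>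
    EReal.continuousAt_add (Or.inr (EReal.coe_ne_bot _)) (Or.inr (EReal.coe_ne_top _))

section Ekeland

variable {X : Type*} [MetricSpace X] {G : X → ℝ} {ε : ℝ}

def ekelandSet (G : X → ℝ) (ε : ℝ) (y : X) : Set X := {z | G z + ε * dist z y ≤ G y}

lemma mem_ekelandSet {y z : X} : z ∈ ekelandSet G ε y ↔ G z + ε * dist z y ≤ G y := Iff.rfl

lemma self_mem_ekelandSet (y : X) : y ∈ ekelandSet G ε y := by
  simp [mem_ekelandSet]

lemma ekelandSet_subset (hε : 0 ≤ ε) {y w : X} (hy : y ∈ ekelandSet G ε w) :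
    ekelandSet G ε y ⊆ ekelandSet G ε w := fun z hz => by
  rw [mem_ekelandSet] at hy hz ⊢
  nlinarith [dist_triangle z y w]

lemma LowerSemicontinuous.isClosed_ekelandSet (hG : LowerSemicontinuous G) (y : X) :
    IsClosed (ekelandSet G ε y) :=
  (hG.add (continuous_const.mul (continuous_id.dist continuous_const)).lowerSemicontinuous)
    |>.isClosed_preimage (G y)

lemma exists_mem_ekelandSet_forall_mul_dist_lt (hε : 0 ≤ ε) (hG : BddBelow (range G)) (y : X)
    {r : ℝ} (hr : 0 < r) : ∃ z ∈ ekelandSet G ε y, ∀ w ∈ ekelandSet G ε z, ε * dist w z < r := by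
  have hne : (G '' ekelandSet G ε y).Nonempty := ⟨G y, y, self_mem_ekelandSet y, rfl⟩
  obtain ⟨_, ⟨z, hz, rfl⟩, hzlt⟩ := exists_lt_of_csInf_lt hne (lt_add_of_pos_right _ hr)
  refine ⟨z, hz, fun w hw => ?_⟩
  have hinf : sInf (G '' ekelandSet G ε y) ≤ G w :=
    csInf_le (hG.mono (image_subset_range _ _)) ⟨w, ekelandSet_subset hε hz hw, rfl⟩
  rw [mem_ekelandSet] at hw
  linarith

lemma exists_iInter_eq_singleton_of_antitone [CompleteSpace X] {T : ℕ → Set X}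
    (hT : ∀ n, IsClosed (T n)) (hanti : Antitone T) (hne : ∀ n, (T n).Nonempty)
    {c : ℕ → X} {ρ : ℕ → ℝ} (hsub : ∀ n, T n ⊆ closedBall (c n) (ρ n)) (hρ : Tendsto ρ atTop (𝓝 0)) :
    ∃ v, ⋂ n, T n = {v} := by
  have hbdd : ∀ n, Bornology.IsBounded (T n) := fun n => isBounded_closedBall.subset (hsub n)
  have hdiam : Tendsto (fun n => diam (T n)) atTop (𝓝 0) := by
    refine squeeze_zero (fun n => diam_nonneg) (fun n => ?_) (by simpa using hρ.const_mul 2)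
    obtain ⟨z, hz⟩ := hne n
    exact diam_le_of_subset_closedBall (dist_nonneg.trans (hsub n hz)) (hsub n)
  obtain ⟨v, hv⟩ := nonempty_iInter_of_nonempty_biInter hT hbdd
    (fun N => (hne N).mono fun z hz => mem_iInter₂.2 fun n hn => hanti hn hz) hdiam
  refine ⟨v, eq_singleton_iff_unique_mem.2 ⟨hv, fun z hz => dist_le_zero.1 ?_⟩⟩
  exact ge_of_tendsto' hdiam fun n =>
    dist_le_diam_of_mem (hbdd n) (mem_iInter.1 hz n) (mem_iInter.1 hv n)

theorem LowerSemicontinuous.exists_le_forall_lt_add_mul_dist [CompleteSpace X]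
    (hG : LowerSemicontinuous G) (hbdd : BddBelow (range G)) (hε : 0 < ε) (x₁ : X) :
    ∃ v, G v ≤ G x₁ ∧ ∀ z ≠ v, G v < G z + ε * dist z v := by
  have hr : ∀ n : ℕ, (0 : ℝ) < (1 / 2) ^ n := fun n => by positivity
  choose step step_mem step_small using
    fun n y => exists_mem_ekelandSet_forall_mul_dist_lt hε.le hbdd y (hr n)
  let x : ℕ → X := fun n => Nat.rec x₁ step n
  let T : ℕ → Set X := fun n => ekelandSet G ε (x (n + 1))
  have hanti : Antitone T := antitone_nat_of_succ_le fun n =>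
    ekelandSet_subset hε.le (step_mem _ _)
  have hsub : ∀ n, T n ⊆ closedBall (x (n + 1)) ((1 / 2) ^ n / ε) := fun n z hz => by
    rw [mem_closedBall, le_div_iff₀ hε, mul_comm]
    exact (step_small _ _ z hz).le
  have hρ : Tendsto (fun n : ℕ => ((1 : ℝ) / 2) ^ n / ε) atTop (𝓝 0) := by
    simpa using (tendsto_pow_atTop_nhds_zero_of_lt_one (by norm_num : (0 : ℝ) ≤ 1 / 2)
      (by norm_num)).div_const ε
  obtain ⟨v, hv⟩ := exists_iInter_eq_singleton_of_antitone (fun n => hG.isClosed_ekelandSet _)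
    hanti (fun n => ⟨_, self_mem_ekelandSet _⟩) hsub hρ
  have hvT : ∀ n, v ∈ T n := mem_iInter.1 (hv ▸ mem_singleton v)
  refine ⟨v, ?_, fun z hzv => ?_⟩
  · have hv₁ : v ∈ ekelandSet G ε x₁ := ekelandSet_subset hε.le (step_mem _ _) (hvT 0)
    have := mul_nonneg hε.le (dist_nonneg (x := v) (y := x₁))
    rw [mem_ekelandSet] at hv₁
    linarith
  · by_contra! hz
    have hzT : z ∈ ⋂ n, T n := mem_iInter.2 fun n => ekelandSet_subset hε.le (hvT n) hz
    rw [hv] at hzT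
    exact hzv hzT

theorem LowerSemicontinuous.exists_forall_lt_add_mul_dist_of_ne_top [CompleteSpace X]
    {g : X → EReal} (hg : LowerSemicontinuous g) {B : ℝ} (hB : ∀ z, (B : EReal) ≤ g z)
    (hε : 0 < ε) {x₁ : X} (hx₁ : g x₁ ≠ ⊤) :
    ∃ v, ∀ z ≠ v, g v < g z + ((ε * dist z v : ℝ) : EReal) := by
  have hx₁' : g x₁ ≠ ⊥ := ((EReal.bot_lt_coe B).trans_le (hB x₁)).ne'
  -- Ekeland's principle applies to the real-valued truncation `min g C` with `C > g x₁`.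
  set C : ℝ := (g x₁).toReal + 1
  set G : X → ℝ := fun z => (g z ⊓ C).toReal
  have hlow : ∀ z, ((min B C : ℝ) : EReal) ≤ g z ⊓ C := fun z =>
    le_inf ((EReal.coe_le_coe_iff.2 (min_le_left B C)).trans (hB z))
      (EReal.coe_le_coe_iff.2 (min_le_right B C))
  have hcoe : ∀ z, (G z : EReal) = g z ⊓ C := fun z => EReal.coe_toReal
    (inf_le_right.trans_lt (EReal.coe_lt_top C)).ne ((EReal.bot_lt_coe _).trans_le (hlow z)).ne'
  have hGlsc : LowerSemicontinuous G := by
    refine lowerSemicontinuous_iff_isClosed_preimage.2 fun t => ?_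
    have : G ⁻¹' Iic t = (fun z => g z ⊓ C) ⁻¹' Iic (t : EReal) := by
      ext z; simp [← hcoe z]
    rw [this]
    exact (hg.inf lowerSemicontinuous_const).isClosed_preimage _
  have hGB : BddBelow (range G) := ⟨min B C, by
    rintro _ ⟨z, rfl⟩
    exact EReal.coe_le_coe_iff.1 (hcoe z ▸ hlow z)⟩
  obtain ⟨v, hvx₁, hv⟩ := hGlsc.exists_le_forall_lt_add_mul_dist hGB hε x₁
  have hGx₁ : G x₁ < C := by
    have : (G x₁ : EReal) ≤ (g x₁).toReal := by
      rw [hcoe, EReal.coe_toReal hx₁ hx₁']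
      exact inf_le_left
    exact (EReal.coe_le_coe_iff.1 this).trans_lt (lt_add_one _)
  have hgv : g v = G v := by
    have hlt : g v ⊓ C < C := by
      rw [← hcoe]
      exact EReal.coe_lt_coe_iff.2 (hvx₁.trans_lt hGx₁)
    rw [hcoe, inf_eq_left.2 (not_le.1 (inf_lt_right.1 hlt)).le]
  refine ⟨v, fun z hz => ?_⟩
  calc g v = G v := hgv
    _ < ((G z + ε * dist z v : ℝ) : EReal) := EReal.coe_lt_coe_iff.2 (hv z hz)
    _ = G z + ((ε * dist z v : ℝ) : EReal) := EReal.coe_add _ _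
    _ ≤ g z + ((ε * dist z v : ℝ) : EReal) := by
      gcongr
      exact hcoe z ▸ inf_le_left

end Ekeland

lemma exists_forall_le_mul_sq_sub_mul {a : ℝ} (ha : 0 < a) (b : ℝ) :
    ∃ B, ∀ t : ℝ, B ≤ a * t ^ 2 - b * t :=
  ⟨-b ^ 2 / (4 * a), fun t => by
    rw [div_le_iff₀ (by positivity)]
    nlinarith [sq_nonneg (2 * a * t - b)]⟩

section Perturbation

variable {E : Type*} [NormedAddCommGroup E] [NormedSpace ℝ E]

lemma InsigDownside.exists_le_add_norm_sub_sq_sub {f : E → EReal} (hf : InsigDownside f)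
    (x₀ : E) (x₀s : StrongDual ℝ E) :
    ∃ B : ℝ, ∀ z, (B : EReal) ≤ f z + ((‖z - x₀‖ ^ 2 - x₀s z : ℝ) : EReal) := by
  obtain ⟨a₀, b₀, c₀, ha₀, hf⟩ := hf
  obtain ⟨B, hB⟩ := exists_forall_le_mul_sq_sub_mul (a := 1 - a₀) (by linarith)
    (b₀ + 2 * ‖x₀‖ + ‖x₀s‖)
  refine ⟨B + ‖x₀‖ ^ 2 - c₀, fun z => ?_⟩
  have hreal :
      B + ‖x₀‖ ^ 2 - c₀ ≤ (-a₀ * ‖z‖ ^ 2 - b₀ * ‖z‖ - c₀) + (‖z - x₀‖ ^ 2 - x₀s z) := by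
    have hsq : (‖z‖ - ‖x₀‖) ^ 2 ≤ ‖z - x₀‖ ^ 2 :=
      sq_le_sq.2 ((abs_norm_sub_norm_le z x₀).trans (le_abs_self _))
    have hdual : x₀s z ≤ ‖x₀s‖ * ‖z‖ := (le_abs_self _).trans (x₀s.le_opNorm z)
    nlinarith [hB ‖z‖]
  calc (↑(B + ‖x₀‖ ^ 2 - c₀) : EReal)
      ≤ ↑((-a₀ * ‖z‖ ^ 2 - b₀ * ‖z‖ - c₀) + (‖z - x₀‖ ^ 2 - x₀s z)) :=
        EReal.coe_le_coe_iff.2 hreal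
    _ = ↑(-a₀ * ‖z‖ ^ 2 - b₀ * ‖z‖ - c₀) + ↑(‖z - x₀‖ ^ 2 - x₀s z) := EReal.coe_add _ _
    _ ≤ f z + ↑(‖z - x₀‖ ^ 2 - x₀s z) := by gcongr; exact hf z

def perturbation (x₀ : E) (x₀s : StrongDual ℝ E) (ε : ℝ) (v : E) (z : E) : ℝ :=
  ‖z - x₀‖ ^ 2 - x₀s z + ε * ‖z - v‖

lemma continuous_perturbation (x₀ : E) (x₀s : StrongDual ℝ E) (ε : ℝ) (v : E) :
    Continuous (perturbation x₀ x₀s ε v) := by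
  unfold perturbation
  fun_prop

lemma convexOn_perturbation (x₀ : E) (x₀s : StrongDual ℝ E) {ε : ℝ} (hε : 0 ≤ ε) (v : E) :
    ConvexOn ℝ univ (perturbation x₀ x₀s ε v) := by
  have hnorm : ∀ c : E, ConvexOn ℝ univ fun z => ‖z - c‖ := fun c => by
    have := (convexOn_norm (E := E) convex_univ).translate_left (-c)
    simp only [Function.comp_def, preimage_univ, ← sub_eq_add_neg] at this
    exact this
  have hsq := (hnorm x₀).pow (fun _ _ => norm_nonneg _) 2
  exact (hsq.sub (x₀s.toLinearMap.concaveOn convex_univ)).add ((hnorm v).smul hε)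

lemma InsigDownside.exists_forall_lt_add_perturbation [CompleteSpace E] {f : E → EReal}
    (hf : InsigDownside f) (hlsc : LowerSemicontinuous f) {x₁ : E} (hx₁ : f x₁ ≠ ⊤) (x₀ : E)
    (x₀s : StrongDual ℝ E) {ε : ℝ} (hε : 0 < ε) :
    ∃ v, ∀ y ≠ v, f v + (perturbation x₀ x₀s ε v v : EReal) <
      f y + (perturbation x₀ x₀s ε v y : EReal) := by
  obtain ⟨B, hB⟩ := hf.exists_le_add_norm_sub_sq_sub x₀ x₀s
  have hg := hlsc.add_coe (h := fun z => ‖z - x₀‖ ^ 2 - x₀s z) (by fun_prop)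
  obtain ⟨v, hv⟩ := hg.exists_forall_lt_add_mul_dist_of_ne_top hB hε (x₁ := x₁)
    ((EReal.add_ne_top_iff_ne_top_left (EReal.coe_ne_bot _) (EReal.coe_ne_top _)).2 hx₁)
  refine ⟨v, fun y hy => ?_⟩
  simpa [perturbation, EReal.coe_add, add_assoc, dist_eq_norm] using hv y hy

lemma norm_sub_sq_le_of_neg_mem_convSubdiff_perturbation {x₀ v : E} {x₀s a : StrongDual ℝ E}
    {ε : ℝ} (ha : -a ∈ convSubdiff (perturbation x₀ x₀s ε v) v) (y : E) :
    ‖v - x₀‖ ^ 2 ≤ ‖y - x₀‖ ^ 2 + ε * ‖y - v‖ + (a - x₀s) (y - v) := by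
  have := ha y
  simp only [perturbation, sub_self, norm_zero, mul_zero, add_zero,
    neg_apply, sub_apply, map_sub] at this ⊢
  linarith

variable {x₀ v : E} {φ : StrongDual ℝ E} {ε : ℝ}

lemma norm_sub_le_of_forall_norm_sub_sq_le (hε : 0 ≤ ε) (hφ : 0 ≤ φ (v - x₀))
    (hkey : ∀ y, ‖v - x₀‖ ^ 2 ≤ ‖y - x₀‖ ^ 2 + ε * ‖y - v‖ + φ (y - v)) : ‖v - x₀‖ ≤ ε := by
  have h := hkey x₀
  rw [sub_self, norm_zero, norm_sub_rev x₀ v, ← neg_sub v x₀, map_neg] at h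
  nlinarith [norm_nonneg (v - x₀)]

lemma opNorm_le_of_forall_norm_sub_sq_le (hε : 0 < ε) (hv : ‖v - x₀‖ ≤ ε)
    (hkey : ∀ y, ‖v - x₀‖ ^ 2 ≤ ‖y - x₀‖ ^ 2 + ε * ‖y - v‖ + φ (y - v)) : ‖φ‖ ≤ 4 * ε := by
  have hunit : ∀ u : E, ‖u‖ = 1 → -(4 * ε) ≤ φ u := fun u hu => by
    have h := hkey (v + ε • u)
    have hεu : ‖ε • u‖ = ε := by rw [norm_smul, hu, Real.norm_of_nonneg hε.le, mul_one]
    have htri : ‖v + ε • u - x₀‖ ≤ ‖v - x₀‖ + ε := by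
      rw [add_sub_right_comm]
      exact (norm_add_le _ _).trans_eq (by rw [hεu])
    rw [add_sub_cancel_left, hεu, map_smul, smul_eq_mul] at h
    have hsq := pow_le_pow_left₀ (norm_nonneg _) htri 2
    have : 0 ≤ ε * (4 * ε + φ u) := by nlinarith [norm_nonneg (v - x₀)]
    linarith [nonneg_of_mul_nonneg_right this hε]
  refine ContinuousLinearMap.opNorm_le_of_unit_norm (by positivity) fun u hu =>
    abs_le.2 ⟨hunit u hu, ?_⟩
  have := hunit (-u) (by rwa [norm_neg])
  rw [map_neg] at this
  linarith

lemma dist_le_of_neg_mem_convSubdiff_perturbation {x₀s a : StrongDual ℝ E} (hε : 0 < ε)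
    (hpol : 0 ≤ (a - x₀s) (v - x₀)) (ha : -a ∈ convSubdiff (perturbation x₀ x₀s ε v) v) :
    dist (x₀, x₀s) (v, a) ≤ 4 * ε := by
  have hkey := norm_sub_sq_le_of_neg_mem_convSubdiff_perturbation ha
  have hv := norm_sub_le_of_forall_norm_sub_sq_le hε.le hpol hkey
  rw [Prod.dist_eq, dist_comm, dist_eq_norm, dist_comm, dist_eq_norm]
  exact max_le (by linarith) (opNorm_le_of_forall_norm_sub_sq_le hε hv hkey)

end Perturbation

lemma WeakSubdiff.exists_mem_sd_neg_mem_convSubdiff {E : Type*} [NormedAddCommGroup E]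
    [NormedSpace ℝ E] (W : WeakSubdiff E) {f : E → EReal} (hproper : ∃ x, f x ≠ ⊤)
    (hnotbot : ∀ x, f x ≠ ⊥) (hlsc : LowerSemicontinuous f) {h : E → ℝ} (hh : Continuous h)
    (hconv : ConvexOn ℝ univ h) {v : E} (hmin : ∀ y ≠ v, f v + (h v : EReal) < f y + h y) :
    ∃ a ∈ W.sd f v, -a ∈ convSubdiff h v := by
  have hne_bot : ∀ x, f x + (h x : EReal) ≠ ⊥ := fun x =>
    EReal.add_ne_bot_iff.2 ⟨hnotbot x, EReal.coe_ne_bot _⟩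
  obtain ⟨x₁, hx₁⟩ := hproper
  have hne_top : f x₁ + (h x₁ : EReal) ≠ ⊤ :=
    (EReal.add_ne_top_iff_ne_top_left (EReal.coe_ne_bot _) (EReal.coe_ne_top _)).2 hx₁
  have h0 := W.zero_mem _ ⟨x₁, hne_top⟩ hne_bot (hlsc.add_coe hh) v hmin
  obtain ⟨a, ha, b, hb, hab⟩ := W.sum_rule f ⟨x₁, hx₁⟩ hnotbot hlsc h hh hconv v h0
  exact ⟨a, ha, eq_neg_of_add_eq_zero_right hab ▸ hb⟩

theorem stmt15 {E : Type*} [NormedAddCommGroup E] [NormedSpace ℝ E] [CompleteSpace E]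
    (W : WeakSubdiff E) (f : E → EReal)
    (hproper : ∃ x, f x ≠ ⊤) (hnotbot : ∀ x, f x ≠ ⊥)
    (hlsc : LowerSemicontinuous f) (hdown : InsigDownside f) :
    monoPolar {p : E × StrongDual ℝ E | p.2 ∈ W.sd f p.1} ⊆
      closure {p : E × StrongDual ℝ E | p.2 ∈ W.sd f p.1} := by
  rintro ⟨x₀, x₀s⟩ hpol
  refine Metric.mem_closure_iff.2 fun δ hδ => ?_
  have hε : 0 < δ / 5 := by positivity
  obtain ⟨x₁, hx₁⟩ := hproper
  obtain ⟨v, hmin⟩ := hdown.exists_forall_lt_add_perturbation hlsc hx₁ x₀ x₀s hε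
  obtain ⟨a, ha, hneg⟩ := W.exists_mem_sd_neg_mem_convSubdiff ⟨x₁, hx₁⟩ hnotbot hlsc
    (continuous_perturbation x₀ x₀s _ v) (convexOn_perturbation x₀ x₀s hε.le v) hmin
  have hdist := dist_le_of_neg_mem_convSubdiff_perturbation hε (hpol (v, a) ha) hneg
  exact ⟨(v, a), ha, hdist.trans_lt (by linarith)⟩
end
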